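/- Let n and d be odd positive integers with (n+1)/2 ≤ d ≤ n. If (n, d) ∉ {(5, 3), (9, 5)}, then hmin(n, d) = (d+1)/2; moreover, hmin(5, 3) = 3 and hmin(9, 5) = 4. Equivalently, hmin(n, d) = (d+1)/2 + [(n, d) ∈ {(5,3), (9,5)}], where [·] is 1 if the condition holds and 0 otherwise. -/

import Mathlib

open Finset
open scoped Classical

/-- The closed neighborhood `N[v] = {v} ∪ N(v)` of a vertex `v` in a simple graph `G`.
A `d`-regular graph with loops is modeled by a simple graph in which every
closed neighborhood has size `d`. -/
noncomputable def closedNbhd {n : ℕ} (G : SimpleGraph (Fin n)) (v : Fin n) : Finset (Fin n) :=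
  Finset.univ.filter fun u => u = v ∨ G.Adj v u

/-- A configuration with parameters `(n, d, h)`: a simple graph `G` on `n` vertices all
of whose closed neighborhoods have size `d` (i.e. a `d`-regular graph with loops),
together with an opinion function `f : V → {1, -1}` having exactly `h` happy vertices. -/
def IsConfig {n : ℕ} (d h : ℕ) (G : SimpleGraph (Fin n)) (f : Fin n → ℤ) : Prop :=
  (∀ v, (closedNbhd G v).card = d) ∧ (∀ v, f v = 1 ∨ f v = -1) ∧
  (Finset.univ.filter fun v => f v = 1).card = h

/-- The number of proponents: vertices `v` with `∑_{u ∈ N[v]} f u ≥ 1`. -/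
noncomputable def numProponents {n : ℕ} (G : SimpleGraph (Fin n)) (f : Fin n → ℤ) : ℕ :=
  (Finset.univ.filter fun v => 1 ≤ ∑ u ∈ closedNbhd G v, f u).card

/-- A configuration is approving if more than `n/2` of its vertices are proponents. -/
def IsApproving {n : ℕ} (G : SimpleGraph (Fin n)) (f : Fin n → ℤ) : Prop :=
  2 * numProponents G f > n

/-- `hmin n d`: the least `h` for which an approving configuration with parameters
`(n, d, h)` exists. -/
noncomputable def hmin (n d : ℕ) : ℕ :=
  sInf {h : ℕ | ∃ (G : SimpleGraph (Fin n)) (f : Fin n → ℤ), IsConfig d h G f ∧ IsApproving G f}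

/-- `hmax n d`: the greatest `h ≤ n` for which a disapproving configuration with parameters
`(n, d, h)` exists. -/
noncomputable def hmax (n d : ℕ) : ℕ :=
  sSup {h : ℕ | h ≤ n ∧
    ∃ (G : SimpleGraph (Fin n)) (f : Fin n → ℤ), IsConfig d h G f ∧ ¬ IsApproving G f}

/-- `hminN n`: the minimum of `hmin n d` over odd `d` with `1 ≤ d ≤ n`. -/
noncomputable def hminN (n : ℕ) : ℕ :=
  sInf {m : ℕ | ∃ d : ℕ, Odd d ∧ 1 ≤ d ∧ d ≤ n ∧ m = hmin n d}

/-!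
A proponent needs `(d + 1) / 2` happy vertices in its closed neighbourhood, so
`hmin n d ≥ (d + 1) / 2`. Write `n = 2m + 1` and `d = 2c + 1`. The bound is attained by the
complete graph when `c = m`, by a join of two circulant complements when `m < 2c`, and, when
`m = 2c` with `c ≥ 3`, by a happy clique attached to the complement of a cycle that is matched into
a sad clique.

If `m = 2c` and only `c + 1` vertices are happy, every happy vertex has exactly the `2c + 1`
proponents as closed neighbourhood. Counting edges between the `c` sad proponents, each with at most
`c - 1` neighbours among the `2c` opponents, and the opponents, each of which needs such a
neighbour, gives `2c ≤ c (c - 1)`, so `c ≥ 3`. This excludes `(5, 3)` and `(9, 5)`, where explicit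
graphs with one more happy vertex exist.
-/

def HasApprovingConfig (n d h : ℕ) : Prop :=
  ∃ (G : SimpleGraph (Fin n)) (f : Fin n → ℤ), IsConfig d h G f ∧ IsApproving G f

noncomputable def proponents {n : ℕ} (G : SimpleGraph (Fin n)) (f : Fin n → ℤ) :
    Finset (Fin n) :=
  {v | 1 ≤ ∑ u ∈ closedNbhd G v, f u}

lemma hmin_eq_of_isLeast {n d k : ℕ} (hk : IsLeast {h | HasApprovingConfig n d h} k) :
    hmin n d = k :=
  hk.csInf_eq

lemma sum_eq_two_mul_card_filter_sub_card {ι : Type*} (s : Finset ι) (f : ι → ℤ)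
    (hf : ∀ i ∈ s, f i = 1 ∨ f i = -1) :
    ∑ i ∈ s, f i = 2 * #{i ∈ s | f i = 1} - #s := by
  have h : ∀ i ∈ s, f i = 2 * (if f i = 1 then 1 else 0) - 1 := by
    intro i hi
    rcases hf i hi with h | h <;> simp [h]
  rw [sum_congr rfl h, sum_sub_distrib, ← mul_sum, sum_boole]
  simp

section ClosedNbhd

variable {n : ℕ} {G : SimpleGraph (Fin n)}

lemma mem_closedNbhd {u v : Fin n} : u ∈ closedNbhd G v ↔ u = v ∨ G.Adj v u := by
  simp [closedNbhd]

lemma self_mem_closedNbhd (v : Fin n) : v ∈ closedNbhd G v :=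
  mem_closedNbhd.2 (Or.inl rfl)

lemma mem_closedNbhd_comm {u v : Fin n} : u ∈ closedNbhd G v ↔ v ∈ closedNbhd G u := by
  simp only [mem_closedNbhd, eq_comm, G.adj_comm]

end ClosedNbhd

section LowerBound

variable {n d h : ℕ} {G : SimpleGraph (Fin n)} {f : Fin n → ℤ}

lemma IsConfig.sum_closedNbhd (hc : IsConfig d h G f) (v : Fin n) :
    ∑ u ∈ closedNbhd G v, f u = 2 * #{u ∈ closedNbhd G v | f u = 1} - d := by
  rw [sum_eq_two_mul_card_filter_sub_card _ _ fun u _ => hc.2.1 u, hc.1 v]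

lemma IsConfig.card_happy_closedNbhd_le (hc : IsConfig d h G f) (v : Fin n) :
    #{u ∈ closedNbhd G v | f u = 1} ≤ h :=
  hc.2.2 ▸ card_le_card (filter_subset_filter _ (subset_univ _))

lemma IsApproving.proponents_nonempty (ha : IsApproving G f) : (proponents G f).Nonempty :=
  card_pos.1 (show 0 < numProponents G f by unfold IsApproving at ha; omega)

lemma HasApprovingConfig.le_two_mul (hh : HasApprovingConfig n d h) : d + 1 ≤ 2 * h := by
  obtain ⟨G, f, hc, ha⟩ := hh
  obtain ⟨v, hv⟩ := ha.proponents_nonempty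
  have := hc.card_happy_closedNbhd_le v
  have := hc.sum_closedNbhd v ▸ (mem_filter.1 hv).2
  omega

end LowerBound

section ExceptionalCases

variable {n c : ℕ} {G : SimpleGraph (Fin n)} {f : Fin n → ℤ}

lemma IsConfig.happy_subset_closedNbhd (hc : IsConfig (2 * c + 1) (c + 1) G f) {p : Fin n}
    (hp : p ∈ proponents G f) : ({u | f u = 1} : Finset (Fin n)) ⊆ closedNbhd G p := by
  have hsum := hc.sum_closedNbhd p ▸ (mem_filter.1 hp).2
  have heq : {u ∈ closedNbhd G p | f u = 1} = ({u | f u = 1} : Finset (Fin n)) :=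
    eq_of_subset_of_card_le (filter_subset_filter _ (subset_univ _)) (by rw [hc.2.2]; omega)
  exact heq ▸ filter_subset _ _

lemma IsConfig.closedNbhd_eq_proponents (hc : IsConfig (2 * c + 1) (c + 1) G f)
    (hP : 2 * c + 1 ≤ #(proponents G f)) {x : Fin n} (hx : f x = 1) :
    closedNbhd G x = proponents G f :=
  (eq_of_subset_of_card_le
    (fun _ hp => mem_closedNbhd_comm.1 (hc.happy_subset_closedNbhd hp (by simpa using hx)))
    (by rw [hc.1]; exact hP)).symm

theorem HasApprovingConfig.three_le (hc : 0 < c)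
    (hh : HasApprovingConfig (4 * c + 1) (2 * c + 1) (c + 1)) : 3 ≤ c := by
  obtain ⟨G, f, hcfg, happ⟩ := hh
  have hreg := hcfg.1
  set H : Finset (Fin (4 * c + 1)) := {u | f u = 1}
  set P := proponents G f
  have hP : 2 * c + 1 ≤ #P := by
    have : 4 * c + 1 < 2 * #P := happ
    omega
  have hNH : ∀ x ∈ H, closedNbhd G x = P := fun x hx =>
    hcfg.closedNbhd_eq_proponents hP (mem_filter.1 hx).2
  have hHP : H ⊆ P := fun x hx => hNH x hx ▸ self_mem_closedNbhd x
  obtain ⟨x, hx⟩ : H.Nonempty := card_pos.1 (by rw [hcfg.2.2]; omega)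
  set W := P \ H
  set O := Pᶜ
  have hW : #W = c := by rw [card_sdiff_of_subset hHP, ← hNH x hx, hreg, hcfg.2.2]; omega
  have hO : #O = 2 * c := by rw [card_compl, ← hNH x hx, hreg, Fintype.card_fin]; omega
  -- `N[w]` already contains `H ∪ {w} ⊆ P`, leaving room for at most `c - 1` opponents
  have hWO : ∀ w ∈ W, #{u ∈ O | u ∈ closedNbhd G w} ≤ c - 1 := by
    intro w hw
    obtain ⟨hwP, hwH⟩ := mem_sdiff.1 hw
    have hdisj : Disjoint {u ∈ O | u ∈ closedNbhd G w} (insert w H) :=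
      disjoint_left.2 fun u hu hu' =>
        (mem_compl.1 (mem_filter.1 hu).1) (insert_subset hwP hHP hu')
    have hsub : {u ∈ O | u ∈ closedNbhd G w} ∪ insert w H ⊆ closedNbhd G w :=
      union_subset (filter_subset_filter _ (subset_univ _) |>.trans (by simp))
        (insert_subset (self_mem_closedNbhd w) (hcfg.happy_subset_closedNbhd hwP))
    have := card_le_card hsub
    rw [card_union_of_disjoint hdisj, card_insert_of_notMem hwH, hcfg.2.2, hreg] at this
    omega
  -- an opponent sees no happy vertex, and `O` is too small to contain its closed neighbourhood
  have hOW : ∀ u ∈ O, 1 ≤ #{w ∈ W | u ∈ closedNbhd G w} := by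
    intro u hu
    refine card_pos.2 ?_
    by_contra! hempty
    have hsub : closedNbhd G u ⊆ O := by
      intro v hv
      refine mem_compl.2 fun hvP => ?_
      by_cases hvH : v ∈ H
      · exact mem_compl.1 hu (hNH v hvH ▸ mem_closedNbhd_comm.1 hv)
      · exact (filter_eq_empty_iff.1 hempty) (mem_sdiff.2 ⟨hvP, hvH⟩) (mem_closedNbhd_comm.1 hv)
    have := card_le_card hsub
    rw [hreg, hO] at this
    omega
  have := card_mul_le_card_mul' (fun w u => u ∈ closedNbhd G w) hOW hWO
  rw [hW, hO] at this
  by_contra! hc3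
  interval_cases c <;> omega

end ExceptionalCases

section Construction

variable {V : Type*} [Fintype V] [DecidableEq V]

-- `r v` is the closed neighbourhood of `v`, and `H` the set of happy vertices.
theorem hasApprovingConfig_of_rel {n d h : ℕ} (e : V ≃ Fin n) (r : V → V → Prop) [DecidableRel r]
    (hrefl : ∀ v, r v v) (hsymm : ∀ u v, r u v → r v u) (hdeg : ∀ v, #{u | r v u} = d)
    (H : Finset V) (hH : #H = h) (happ : n < 2 * #{v | d < 2 * #{u ∈ H | r v u}}) :
    HasApprovingConfig n d h := by
  let G := (SimpleGraph.fromRel r).comap e.symm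
  let f : Fin n → ℤ := fun a => if e.symm a ∈ H then 1 else -1
  have hN : ∀ a, closedNbhd G a = ({u | r (e.symm a) u} : Finset V).map e.toEmbedding := by
    intro a
    ext b
    simp only [closedNbhd, G, mem_filter, mem_univ, true_and, mem_map_equiv,
      SimpleGraph.comap_adj, SimpleGraph.fromRel_adj]
    constructor
    · rintro (rfl | ⟨-, h | h⟩)
      exacts [hrefl _, h, hsymm _ _ h]
    · intro h
      by_cases hab : b = a
      · exact Or.inl hab
      · exact Or.inr ⟨fun h' => hab (e.symm.injective h'.symm), Or.inl h⟩
  have hf : ∀ a, f a = 1 ↔ e.symm a ∈ H := fun a => by by_cases ha : e.symm a ∈ H <;> simp [f, ha]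
  have hsum : ∀ a, ∑ u ∈ closedNbhd G a, f u = 2 * #{u ∈ H | r (e.symm a) u} - d := by
    intro a
    rw [sum_eq_two_mul_card_filter_sub_card _ _ fun u _ => by unfold f; split_ifs <;> simp,
      hN, card_map, hdeg, filter_map, card_map]
    congr 4
    ext u
    simp [hf, and_comm]
  refine ⟨G, f, ⟨fun a => by rw [hN, card_map, hdeg], fun a => by unfold f; split_ifs <;> simp,
    ?_⟩, ?_⟩
  · rw [← hH, ← card_map e.toEmbedding]
    congr 1
    ext a
    simp [hf]
  · show n < 2 * #{a | 1 ≤ ∑ u ∈ closedNbhd G a, f u}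
    convert happ using 2
    rw [← card_map e.symm.toEmbedding]
    congr 1
    ext v
    simp only [hsum, mem_map_equiv, mem_filter, mem_univ, true_and, Equiv.symm_symm,
      Equiv.symm_apply_apply]
    omega

theorem hasApprovingConfig_of_dominating {n c : ℕ} (e : V ≃ Fin n) (r : V → V → Prop)
    [DecidableRel r] (hrefl : ∀ v, r v v) (hsymm : ∀ u v, r u v → r v u)
    (hdeg : ∀ v, #{u | r v u} = 2 * c + 1) (H P : Finset V) (hH : #H = c + 1)
    (hP : n < 2 * #P) (hdom : ∀ p ∈ P, ∀ x ∈ H, r p x) :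
    HasApprovingConfig n (2 * c + 1) (c + 1) := by
  refine hasApprovingConfig_of_rel e r hrefl hsymm hdeg H hH (hP.trans_le ?_)
  gcongr
  intro p hp
  rw [mem_filter, filter_true_of_mem (hdom p hp), hH]
  exact ⟨mem_univ p, by omega⟩

end Construction

section CayleyRel

variable {A : Type*} [AddGroup A]

def cayleyRel (S : Finset A) (x y : A) : Prop := y - x ∈ S

instance [DecidableEq A] (S : Finset A) : DecidableRel (cayleyRel S) :=
  fun x y => inferInstanceAs (Decidable (y - x ∈ S))

lemma card_cayleyRel [Fintype A] [DecidableEq A] (S : Finset A) (x : A) :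
    #{y | cayleyRel S x y} = #S := by
  have : ({y | cayleyRel S x y} : Finset A) = S.map (Equiv.addRight x).toEmbedding := by
    ext y
    simp only [mem_filter, mem_univ, true_and, cayleyRel, mem_map_equiv,
      Equiv.addRight_symm_apply, sub_eq_add_neg]
  rw [this, card_map]

lemma cayleyRel_refl {S : Finset A} (h0 : 0 ∈ S) (x : A) : cayleyRel S x x := by
  simpa [cayleyRel] using h0

lemma cayleyRel_symm {S : Finset A} (hS : ∀ z ∈ S, -z ∈ S) (x y : A) (h : cayleyRel S x y) :
    cayleyRel S y x := by
  simpa [cayleyRel] using hS _ h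

end CayleyRel

section SumRel

variable {α β : Type*}

def sumRel (r₁ : α → α → Prop) (r₂ : β → β → Prop) (x : α → β → Prop) :
    α ⊕ β → α ⊕ β → Prop
  | .inl a, .inl a' => r₁ a a'
  | .inl a, .inr b => x a b
  | .inr b, .inl a => x a b
  | .inr b, .inr b' => r₂ b b'

variable {r₁ : α → α → Prop} {r₂ : β → β → Prop} {x : α → β → Prop}

instance [DecidableRel r₁] [DecidableRel r₂] [∀ a b, Decidable (x a b)] :
    DecidableRel (sumRel r₁ r₂ x)
  | .inl a, .inl a' => inferInstanceAs (Decidable (r₁ a a'))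
  | .inl a, .inr b => inferInstanceAs (Decidable (x a b))
  | .inr b, .inl a => inferInstanceAs (Decidable (x a b))
  | .inr b, .inr b' => inferInstanceAs (Decidable (r₂ b b'))

lemma sumRel_refl (h₁ : ∀ a, r₁ a a) (h₂ : ∀ b, r₂ b b) : ∀ v, sumRel r₁ r₂ x v v
  | .inl a => h₁ a
  | .inr b => h₂ b

lemma sumRel_symm (h₁ : ∀ a a', r₁ a a' → r₁ a' a) (h₂ : ∀ b b', r₂ b b' → r₂ b' b) :
    ∀ u v, sumRel r₁ r₂ x u v → sumRel r₁ r₂ x v u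
  | .inl a, .inl a' => h₁ a a'
  | .inl _, .inr _ => id
  | .inr _, .inl _ => id
  | .inr b, .inr b' => h₂ b b'

lemma card_filter_sum [Fintype α] [Fintype β] (p : α ⊕ β → Prop) [DecidablePred p] :
    #{v | p v} = #{a | p (.inl a)} + #{b | p (.inr b)} := by
  rw [← card_toLeft_add_card_toRight]
  congr 2 <;> ext <;> simp

variable [Fintype α] [Fintype β] [DecidableRel r₁] [DecidableRel r₂] [∀ a b, Decidable (x a b)]

lemma card_sumRel_inl (a : α) :
    #{v | sumRel r₁ r₂ x (.inl a) v} = #{a' | r₁ a a'} + #{b | x a b} :=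
  card_filter_sum _

lemma card_sumRel_inr (b : β) :
    #{v | sumRel r₁ r₂ x (.inr b) v} = #{a | x a b} + #{b' | r₂ b b'} :=
  card_filter_sum _

end SumRel

namespace ZMod

variable {t s : ℕ}

noncomputable def ball (t s : ℕ) : Finset (ZMod t) := (Icc (-s : ℤ) s).image (↑)

lemma neg_mem_ball {z : ZMod t} (hz : z ∈ ball t s) : -z ∈ ball t s := by
  obtain ⟨i, hi, rfl⟩ := mem_image.1 hz
  exact mem_image.2 ⟨-i, by simp only [mem_Icc] at hi ⊢; omega, by push_cast; rfl⟩

lemma card_ball (h : 2 * s < t) : #(ball t s) = 2 * s + 1 := by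
  rw [ball, card_image_of_injOn, Int.card_Icc]
  · omega
  intro i hi j hj hij
  simp only [coe_Icc, Set.mem_Icc] at hi hj
  have hdvd : (t : ℤ) ∣ i - j := (intCast_eq_intCast_iff_dvd_sub j i t).1 hij.symm
  have := Int.eq_zero_of_abs_lt_dvd hdvd (by rw [abs_lt]; omega)
  omega

variable [NeZero t]

noncomputable def coball (t s : ℕ) [NeZero t] : Finset (ZMod t) := insert 0 (ball t s)ᶜ

lemma neg_mem_coball {z : ZMod t} (hz : z ∈ coball t s) : -z ∈ coball t s := by
  simp only [coball, mem_insert, mem_compl, neg_eq_zero] at hz ⊢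
  exact hz.imp id fun h h' => h (neg_neg z ▸ neg_mem_ball h')

lemma card_coball (h : 2 * s < t) : #(coball t s) = t - 2 * s := by
  have h0 : (0 : ZMod t) ∈ ball t s := mem_image.2 ⟨0, by simp, by simp⟩
  rw [coball, card_insert_of_notMem (by simpa using h0), card_compl, ZMod.card, card_ball h]
  omega

end ZMod

section Witnesses

open ZMod (coball card_coball neg_mem_coball)

lemma hasApprovingConfig_complete (m : ℕ) :
    HasApprovingConfig (2 * m + 1) (2 * m + 1) (m + 1) := by
  obtain ⟨H, -, hH⟩ :=
    exists_subset_card_eq (n := m + 1) (s := (univ : Finset (Fin (2 * m + 1)))) (by simp; omega)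
  exact hasApprovingConfig_of_dominating (Equiv.refl _) (fun _ _ => True) (fun _ => trivial)
    (fun _ _ _ => trivial) (fun _ => by simp) H univ hH (by simp) fun _ _ _ _ => trivial

-- The happy vertices lie in the first part, which every vertex of the larger second part sees.
lemma hasApprovingConfig_join {c s : ℕ} (hs : 0 < s) (hsc : s < c) :
    HasApprovingConfig (2 * (c + s) + 1) (2 * c + 1) (c + 1) := by
  have : NeZero (c + s) := ⟨by omega⟩
  obtain ⟨H, -, hH⟩ := exists_subset_card_eq (n := c + 1) (s := (univ : Finset (ZMod (c + s))))
    (by simp [ZMod.card]; omega)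
  refine hasApprovingConfig_of_dominating
    (Fintype.equivFinOfCardEq (by simp [ZMod.card]; omega))
    (sumRel (cayleyRel (coball (c + s) s)) (cayleyRel (coball (c + s + 1) s)) fun _ _ => True)
    (sumRel_refl (cayleyRel_refl (mem_insert_self _ _)) (cayleyRel_refl (mem_insert_self _ _)))
    (sumRel_symm (cayleyRel_symm fun _ => neg_mem_coball)
      (cayleyRel_symm fun _ => neg_mem_coball))
    ?_ (H.map .inl) (univ.map .inr) (by rw [card_map, hH]) (by simp [ZMod.card]; omega) ?_
  · rintro (a | b)
    · rw [card_sumRel_inl, card_cayleyRel, card_coball (by omega)]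
      simp [ZMod.card]
      omega
    · rw [card_sumRel_inr, card_cayleyRel, card_coball (by omega)]
      simp [ZMod.card]
      omega
  · simp [sumRel]

-- The happy clique `Fin (c + 1)` sees `R = ZMod c`, inside which each vertex misses its two
-- cycle neighbours and which is matched to pairs of the sad clique `ZMod c × Fin 2`.
lemma hasApprovingConfig_cone {c : ℕ} (hc : 3 ≤ c) :
    HasApprovingConfig (4 * c + 1) (2 * c + 1) (c + 1) := by
  have : NeZero c := ⟨by omega⟩
  have hfst (j : ZMod c) : #{q : ZMod c × Fin 2 | q.1 = j} = 2 := by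
    rw [show ({q : ZMod c × Fin 2 | q.1 = j} : Finset _) = {j} ×ˢ univ by
      ext ⟨a, b⟩
      simp only [mem_filter, mem_univ, true_and, mem_product, mem_singleton, and_true]]
    simp
  refine hasApprovingConfig_of_dominating
    (Fintype.equivFinOfCardEq (by simp [ZMod.card]; omega))
    (sumRel (fun _ _ => True)
      (sumRel (cayleyRel (coball c 1)) (fun _ _ => True)
        fun (j : ZMod c) (q : ZMod c × Fin 2) => q.1 = j)
      fun (_ : Fin (c + 1)) w => w.isLeft)
    (sumRel_refl (fun _ => trivial)
      (sumRel_refl (cayleyRel_refl (mem_insert_self _ _)) fun _ => trivial))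
    (sumRel_symm (fun _ _ _ => trivial)
      (sumRel_symm (cayleyRel_symm fun _ => neg_mem_coball) fun _ _ _ => trivial))
    ?_ (univ.map .inl) (univ.disjSum (univ.map .inl)) (by simp) (by simp [ZMod.card]; omega) ?_
  · rintro (i | j | q)
    · rw [card_sumRel_inl, card_filter_sum]
      simp [ZMod.card]
      omega
    · rw [card_sumRel_inr, card_sumRel_inl, card_cayleyRel, card_coball (by omega), hfst]
      simp
      omega
    · rw [card_sumRel_inr, card_sumRel_inr]
      simp [filter_eq, ZMod.card]
      omega
  · simp [sumRel]

lemma hasApprovingConfig_five_three : HasApprovingConfig 5 3 3 :=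
  hasApprovingConfig_of_rel (Equiv.refl _)
    (fun x y : Fin 5 => y - x ∈ ({0, 1, 4} : Finset (Fin 5)))
    (by decide) (by decide) (by decide) {0, 1, 2} rfl (by decide)

-- A happy 4-cycle `0 1 2 3` with a hub `4`, a sad clique `5 6 7 8`, and the matching `i ↔ i + 5`.
def nineEdges : List (Fin 9 × Fin 9) :=
  [(0, 1), (1, 2), (2, 3), (3, 0), (4, 0), (4, 1), (4, 2), (4, 3), (5, 6), (5, 7), (5, 8), (6, 7),
    (6, 8), (7, 8), (0, 5), (1, 6), (2, 7), (3, 8)]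

lemma hasApprovingConfig_nine_five : HasApprovingConfig 9 5 4 :=
  hasApprovingConfig_of_rel (Equiv.refl _)
    (fun x y : Fin 9 => x = y ∨ (x, y) ∈ nineEdges ∨ (y, x) ∈ nineEdges)
    (by decide) (by decide) (by decide) {0, 1, 2, 3} rfl (by decide)

end Witnesses

lemma hasApprovingConfig_of_le {m c : ℕ} (hcm : c ≤ m) (hmc : m ≤ 2 * c)
    (hexc : m = 2 * c → c ≠ 1 ∧ c ≠ 2) : HasApprovingConfig (2 * m + 1) (2 * c + 1) (c + 1) := by
  obtain rfl | hcm := hcm.eq_or_lt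
  · exact hasApprovingConfig_complete c
  obtain hmc | rfl := hmc.lt_or_eq
  · obtain ⟨s, rfl⟩ := Nat.exists_eq_add_of_le hcm.le
    exact hasApprovingConfig_join (by omega) (by omega)
  · rw [show 2 * (2 * c) + 1 = 4 * c + 1 by ring]
    exact hasApprovingConfig_cone (by omega)

lemma hmin_eq_succ {n c : ℕ} (h : HasApprovingConfig n (2 * c + 1) (c + 1)) :
    hmin n (2 * c + 1) = c + 1 :=
  hmin_eq_of_isLeast ⟨h, fun _ hh => by have := hh.le_two_mul; omega⟩

lemma hmin_eq_add_two {c : ℕ} (hc : 0 < c) (hc3 : c < 3)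
    (h : HasApprovingConfig (4 * c + 1) (2 * c + 1) (c + 2)) :
    hmin (4 * c + 1) (2 * c + 1) = c + 2 := by
  refine hmin_eq_of_isLeast ⟨h, fun k hk => ?_⟩
  have := hk.le_two_mul
  obtain hk' | hk' := (show c + 1 ≤ k by omega).eq_or_lt
  · exact absurd ((hk' ▸ hk).three_le hc) (by omega)
  · exact hk'

theorem stmt9_general (n d : ℕ) (hn : Odd n) (hd : Odd d)
    (hhigh : (n + 1) / 2 ≤ d) (hdn : d ≤ n) :
    hmin n d = (d + 1) / 2 + (if (n = 5 ∧ d = 3) ∨ (n = 9 ∧ d = 5) then 1 else 0) := by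
  by_cases hexc : (n = 5 ∧ d = 3) ∨ (n = 9 ∧ d = 5)
  · rw [if_pos hexc]
    rcases hexc with ⟨rfl, rfl⟩ | ⟨rfl, rfl⟩
    · exact hmin_eq_add_two (c := 1) one_pos (by norm_num) hasApprovingConfig_five_three
    · exact hmin_eq_add_two (c := 2) two_pos (by norm_num) hasApprovingConfig_nine_five
  · rw [if_neg hexc]
    obtain ⟨m, rfl⟩ := hn
    obtain ⟨c, rfl⟩ := hd
    rw [show (2 * c + 1 + 1) / 2 + 0 = c + 1 by omega]
    exact hmin_eq_succ (hasApprovingConfig_of_le (by omega) (by omega) (by omega))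

/-- for high-degree classes, `hmin(n,d) = (d+1)/2` plus an indicator of
the two exceptions `(5,3)` and `(9,5)` (where it is `3` and `4`, respectively). -/
theorem stmt9 (n d : ℕ) (hn : Odd n) (hd : Odd d) (hnpos : 0 < n) (hdpos : 0 < d)
    (hhigh : (n + 1) / 2 ≤ d) (hdn : d ≤ n) :
    hmin n d = (d + 1) / 2 + (if (n = 5 ∧ d = 3) ∨ (n = 9 ∧ d = 5) then 1 else 0) :=
  stmt9_general n d hn hd hhigh hdn
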